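/- arXiv:2308.13167 — 2 statements merged into one kernel-verified Lean document; each statement's English description precedes it below -/
import Mathlib

section
/- Let q = 2 and k ∈ ℕ. There is a constant a_{2,k} > 0 such that the number of k-element subsets of [-N, N] ∩ ℤ that contain a square modulo all but finitely many primes is at most a_{2,k} · N^{k − 1/2}. Consequently, the additive subset density of such k-element subsets is zero: their count divided by C(2N+1, k) tends to 0 as N → ∞. -/
/-!
If no subset of odd size of `B` has square product, the square classes of the elements of `B`
(their signs and prime exponents mod 2, as vectors over `𝔽₂`) admit a linear functional equal to
`1` on each of them. By the Chinese remainder theorem and quadratic reciprocity this functional is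
a Jacobi symbol `J(· | n)`, which is then `-1` on all of `B`; since `J(b | n)` only depends on
`n mod 4|b|`, Dirichlet's theorem turns `n` into infinitely many primes modulo which no element
of `B` is a square.

So a `k`-subset of `[-N, N]` containing a square modulo almost every prime arises from a
`(k-1)`-subset `B'` of `[-N, N] \ {0}` by adding `y = 0` or some `y` with `y * ∏ T` a square for a
`T ⊆ B'`. For each `T` at most `√N + 1` such `y` exist, giving at most `(4N)^(k-1) (√N + 1)`
subsets, against `C(2N + 1, k) ≥ N^k / k!`.
-/

/-- `B` contains a square modulo all but finitely many primes. -/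
def ContainsSquareModAEPrime (B : Finset ℤ) : Prop :=
  {p : ℕ | p.Prime ∧ ¬ ∃ b ∈ B, ∃ x : ZMod p, x ^ 2 = (b : ZMod p)}.Finite

open Finset ZMod
open scoped NumberTheorySymbols

theorem Module.Dual.exists_forall_apply_eq_one {K V ι : Type*} [Field K] [AddCommGroup V]
    [Module K V] [Fintype ι] (v : ι → V)
    (h : ∀ c : ι → K, ∑ i, c i • v i = 0 → ∑ i, c i = 0) :
    ∃ f : Module.Dual K V, ∀ i, f (v i) = 1 := by
  classical
  have hsum : Fintype.linearCombination K (fun _ : ι => (1 : K)) ∈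
      LinearMap.range (Fintype.linearCombination K v).dualMap := by
    rw [LinearMap.range_dualMap_eq_dualAnnihilator_ker, Submodule.mem_dualAnnihilator]
    intro c hc
    simpa [Fintype.linearCombination_apply] using h c hc
  obtain ⟨f, hf⟩ := hsum
  refine ⟨f, fun i => ?_⟩
  simpa [Fintype.linearCombination_apply, Pi.single_apply] using
    LinearMap.congr_fun hf (Pi.single i 1)

theorem Module.Dual.exists_forall_apply_eq_one_of_odd_card {V ι : Type*} [AddCommGroup V]
    [Module (ZMod 2) V] [Fintype ι] (v : ι → V)
    (h : ∀ S : Finset ι, Odd #S → ∑ i ∈ S, v i ≠ 0) :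
    ∃ f : Module.Dual (ZMod 2) V, ∀ i, f (v i) = 1 := by
  classical
  refine exists_forall_apply_eq_one v fun c hc => ?_
  set S := univ.filter (fun i => c i = 1)
  have hc01 : ∀ i, c i = if i ∈ S then 1 else 0 := fun i => by
    simpa [S] using (by decide : ∀ x : ZMod 2, x = if x = 1 then 1 else 0) (c i)
  have hvS : ∑ i, c i • v i = ∑ i ∈ S, v i := by
    simp [hc01, ite_smul, Finset.sum_ite_mem]
  have hcS : ∑ i, c i = #S := by
    simp [hc01, Finset.sum_ite_mem]
  rw [hcS, ZMod.natCast_eq_zero_iff_even]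
  by_contra hodd
  exact h S (Nat.not_even_iff_odd.1 hodd) (hvS ▸ hc)

/-- The class of `b ≠ 0` in `ℚˣ / (ℚˣ)²`, as the vector of its sign and prime exponents mod 2. -/
noncomputable def squareClass (b : ℤ) : ZMod 2 × (ℕ → ZMod 2) :=
  (if b < 0 then 1 else 0, fun q => (b.natAbs.factorization q : ZMod 2))

theorem squareClass_mul {a b : ℤ} (ha : a ≠ 0) (hb : b ≠ 0) :
    squareClass (a * b) = squareClass a + squareClass b := by
  refine Prod.ext ?_ (funext fun q => ?_)
  · simp only [squareClass, Prod.fst_add, mul_neg_iff]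
    split_ifs <;> first | rfl | decide | omega
  · simp [squareClass, Int.natAbs_mul, Nat.factorization_mul (Int.natAbs_ne_zero.2 ha)
      (Int.natAbs_ne_zero.2 hb)]

theorem squareClass_prod {s : Finset ℤ} (hs : ∀ b ∈ s, b ≠ 0) :
    squareClass (∏ b ∈ s, b) = ∑ b ∈ s, squareClass b := by
  induction s using Finset.induction_on with
  | empty => ext <;> simp [squareClass]
  | insert a s ha ih =>
    rw [prod_insert ha, sum_insert ha, squareClass_mul (hs a (mem_insert_self a s))
      (prod_ne_zero_iff.2 fun b hb => hs b (mem_insert_of_mem hb)),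
      ih fun b hb => hs b (mem_insert_of_mem hb)]

theorem isSquare_of_squareClass_eq_zero {b : ℤ} (hb : b ≠ 0) (h : squareClass b = 0) :
    IsSquare b := by
  have hsign : 0 ≤ b := by
    by_contra hneg
    simpa [squareClass, not_le.1 hneg] using congrArg Prod.fst h
  have heven : ∀ q, Even (b.natAbs.factorization q) := fun q => by
    simpa [squareClass, ZMod.natCast_eq_zero_iff_even] using congrFun (congrArg Prod.snd h) q
  set f := b.natAbs.factorization
  set g : ℕ →₀ ℕ := f.mapRange (· / 2) (Nat.zero_div 2)
  have hfg : f = g + g := Finsupp.ext fun q => by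
    obtain ⟨e, he⟩ := heven q
    simp [g, f, he]; omega
  have habs : b.natAbs = g.prod (· ^ ·) * g.prod (· ^ ·) := by
    rw [← Finsupp.prod_add_index' (fun _ => pow_zero _) (fun _ => pow_add _), ← hfg,
      Nat.prod_factorization_pow_eq_self (Int.natAbs_ne_zero.2 hb)]
  exact ⟨g.prod (· ^ ·), by rw [← Int.natAbs_of_nonneg hsign, habs]; push_cast; rfl⟩

theorem exists_odd_chi4_chi8_eq (u v : ℤˣ) : ∃ a : ℕ, Odd a ∧ χ₄ a = u ∧ χ₈ a = v := by
  rcases Int.units_eq_one_or u with rfl | rfl <;> rcases Int.units_eq_one_or v with rfl | rfl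
  exacts [⟨1, by decide⟩, ⟨5, by decide⟩, ⟨7, by decide⟩, ⟨3, by decide⟩]

theorem exists_jacobiSym_prime_eq {q : ℕ} (hq : q.Prime) (hq2 : q ≠ 2) {s : ℤ}
    (hs : s = 1 ∨ s = -1) : ∃ r : ℕ, J(r | q) = s := by
  have := Fact.mk hq
  rcases hs with rfl | rfl
  · exact ⟨1, by simp⟩
  · obtain ⟨x, hx⟩ := FiniteField.exists_nonsquare (F := ZMod q) (by rwa [ZMod.ringChar_zmod_n])
    refine ⟨x.val, ?_⟩
    rw [← jacobiSym.legendreSym.to_jacobiSym, legendreSym.eq_neg_one_iff]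
    simpa using hx

theorem exists_odd_jacobiSym_eq (Q : Finset ℕ) (hQ : ∀ q ∈ Q, q.Prime) (ε : ℤ → ℤˣ) :
    ∃ n : ℕ, Odd n ∧ J(-1 | n) = ε (-1) ∧ ∀ q ∈ Q, J(q | n) = ε q := by
  classical
  obtain ⟨a, ha, ha4, ha8⟩ := exists_odd_chi4_chi8_eq (ε (-1)) (ε 2)
  -- `n ≡ a [MOD 8]` fixes `J(-1 | n)` and `J(2 | n)`; by reciprocity, `n mod q` fixes `J(q | n)`.
  have hr : ∀ q ∈ Q, q ≠ 2 → ∃ r : ℕ, J(r | q) = qrSign a q * ε q := fun q hq hq2 =>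
    exists_jacobiSym_prime_eq (hQ q hq) hq2 <| by
      rcases Int.units_eq_one_or (ε q) with h | h <;>
        rcases sq_eq_one_iff.1 (qrSign.sq_eq_one ha ((hQ q hq).odd_of_ne_two hq2)) with h' | h' <;>
        simp [h, h']
  choose! r hr using hr
  have hprime : ∀ i ∈ insert 2 Q, i.Prime := by
    simpa [Nat.prime_two] using hQ
  let m : ℕ → ℕ := fun i => i ^ if i = 2 then 3 else 1
  obtain ⟨n, hcrt⟩ := Nat.chineseRemainderOfFinset (fun i => if i = 2 then a else r i) m
    (insert 2 Q) (fun i hi => pow_ne_zero _ (hprime i hi).ne_zero) fun i hi j hj hij =>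
      Nat.Coprime.pow _ _ ((Nat.coprime_primes (hprime i hi) (hprime j hj)).2 hij)
  have hn8 : n ≡ a [MOD 8] := by simpa [m] using hcrt 2 (mem_insert_self 2 Q)
  have hnq : ∀ q ∈ Q, q ≠ 2 → n ≡ r q [MOD q] := fun q hq hq2 => by
    simpa [m, hq2] using hcrt q (mem_insert_of_mem hq)
  have hn : Odd n := by
    rw [Nat.odd_iff, hn8.of_dvd (by norm_num : 2 ∣ 8), ← Nat.odd_iff]; exact ha
  have hn4 : χ₄ n = χ₄ a := by
    rw [ZMod.χ₄_nat_mod_four, ZMod.χ₄_nat_mod_four a, (hn8.of_dvd (by norm_num : 4 ∣ 8))]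
  refine ⟨n, hn, by rw [jacobiSym.at_neg_one hn, hn4, ha4], fun q hq => ?_⟩
  rcases eq_or_ne q 2 with rfl | hq2
  · rw [Nat.cast_ofNat, jacobiSym.at_two hn, ZMod.χ₈_nat_mod_eight, hn8, ← ZMod.χ₈_nat_mod_eight,
      ha8]
  · have hqo := (hQ q hq).odd_of_ne_two hq2
    rw [jacobiSym.quadratic_reciprocity' hqo hn, qrSign, hn4, ← qrSign,
      jacobiSym.mod_left' (b := q) (a₂ := r q) (by exact_mod_cast hnq q hq hq2), hr q hq hq2,
      ← mul_assoc, ← sq, qrSign.sq_eq_one ha hqo, one_mul]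

theorem jacobiSym_eq_of_primeFactors_subset {n : ℕ} {Q : Finset ℕ} (ψ : ℤ → ℤˣ)
    (hψ : ∀ a b, a ≠ 0 → b ≠ 0 → ψ (a * b) = ψ a * ψ b)
    (hneg : J(-1 | n) = ψ (-1)) (hQ : ∀ q ∈ Q, J(q | n) = ψ q)
    {b : ℤ} (hb : b ≠ 0) (hbQ : b.natAbs.primeFactors ⊆ Q) : J(b | n) = ψ b := by
  have hψ1 : ψ 1 = 1 := by simpa using hψ 1 1 one_ne_zero one_ne_zero
  have hnat : ∀ m : ℕ, m ≠ 0 → m.primeFactors ⊆ Q → J(m | n) = ψ m := by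
    intro m
    induction m using Nat.recOnMul with
    | zero => exact fun h => absurd rfl h
    | one => simp [hψ1]
    | prime p hp => exact fun _ h => hQ p (h (by simp [hp.primeFactors]))
    | mul a b iha ihb =>
      intro hab h
      obtain ⟨ha, hb⟩ := mul_ne_zero_iff.1 hab
      rw [Nat.primeFactors_mul ha hb, union_subset_iff] at h
      push_cast
      rw [jacobiSym.mul_left, iha ha h.1, ihb hb h.2, hψ _ _ (by exact_mod_cast ha)
        (by exact_mod_cast hb), Units.val_mul]
  have habs := hnat _ (Int.natAbs_ne_zero.2 hb) hbQ
  rcases Int.natAbs_eq b with h | h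
  · rwa [h]
  · rw [h, neg_eq_neg_one_mul, jacobiSym.mul_left, hψ _ _ (by norm_num) (by simpa using hb), hneg,
      habs, Units.val_mul]

theorem infinite_setOf_prime_forall_jacobiSym_eq_neg_one {B : Finset ℤ} {n : ℕ} (hn : Odd n)
    (hB : ∀ b ∈ B, J(b | n) = -1) :
    {p : ℕ | p.Prime ∧ ∀ b ∈ B, J(b | p) = -1}.Infinite := by
  have := NeZero.of_pos hn.pos
  have hcop : ∀ b ∈ B, Nat.Coprime b.natAbs n := fun b hb => not_not.1 fun h => by
    simpa [hB b hb] using jacobiSym.eq_zero_iff_not_coprime.2 h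
  have hB0 : ∀ b ∈ B, b ≠ 0 := by
    rintro b hb rfl
    have hn1 : n = 1 := by simpa using hcop 0 hb
    simpa [hn1] using hB 0 hb
  set M := 4 * ∏ b ∈ B, b.natAbs
  have : NeZero M := ⟨mul_ne_zero four_ne_zero (prod_ne_zero_iff.2 fun b hb =>
    Int.natAbs_ne_zero.2 (hB0 b hb))⟩
  have hunit : IsUnit (n : ZMod M) := (ZMod.isUnit_iff_coprime n M).2 <|
    Nat.Coprime.mul_right (by simpa using (Nat.coprime_two_right.2 hn).pow_right 2) <|
      Nat.Coprime.prod_right fun b hb => (hcop b hb).symm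
  refine (Nat.infinite_setOfPred_prime_and_eq_mod hunit).mono ?_
  rintro p ⟨hp, hpn⟩
  refine ⟨hp, fun b hb => ?_⟩
  have hpn : p ≡ n [MOD M] := (ZMod.natCast_eq_natCast_iff _ _ _).1 hpn
  have hpo : Odd p := by
    rw [Nat.odd_iff, hpn.of_dvd (dvd_mul_of_dvd_left (by norm_num : 2 ∣ 4) _), ← Nat.odd_iff]
    exact hn
  rw [jacobiSym.mod_right b hpo, hpn.of_dvd (mul_dvd_mul_left 4 (dvd_prod_of_mem _ hb)),
    ← jacobiSym.mod_right b hn, hB b hb]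

theorem ContainsSquareModAEPrime.exists_odd_card_isSquare_prod {B : Finset ℤ}
    (h : ContainsSquareModAEPrime B) : ∃ S ⊆ B, Odd #S ∧ IsSquare (∏ b ∈ S, b) := by
  by_contra! hB
  have hB0 : ∀ b ∈ B, b ≠ 0 := by
    rintro b hb rfl
    exact hB {0} (by simpa using hb) (by simp) ⟨0, by simp⟩
  obtain ⟨f, hf⟩ := Module.Dual.exists_forall_apply_eq_one_of_odd_card
    (fun b : B => squareClass b) fun S hS hsum => by
      have hSB : S.map (Function.Embedding.subtype _) ⊆ B := map_subtype_subset S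
      have hS0 : ∀ b ∈ S.map (Function.Embedding.subtype _), b ≠ 0 := fun b hb => hB0 b (hSB hb)
      refine hB _ hSB (by simpa using hS) (isSquare_of_squareClass_eq_zero
        (prod_ne_zero_iff.2 hS0) ?_)
      rw [squareClass_prod hS0, sum_map]
      exact hsum
  let ψ : ℤ → ℤˣ := fun b => (-1) ^ f (squareClass b)
  have hψ : ∀ a b, a ≠ 0 → b ≠ 0 → ψ (a * b) = ψ a * ψ b := fun a b ha hb => by
    simp only [ψ, squareClass_mul ha hb, map_add, uzpow_add]
  have hP : ∏ b ∈ B, b.natAbs ≠ 0 :=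
    prod_ne_zero_iff.2 fun b hb => Int.natAbs_ne_zero.2 (hB0 b hb)
  obtain ⟨n, hn, hneg, hQ⟩ := exists_odd_jacobiSym_eq (∏ b ∈ B, b.natAbs).primeFactors
    (fun q hq => Nat.prime_of_mem_primeFactors hq) ψ
  have hJ : ∀ b ∈ B, J(b | n) = -1 := fun b hb => by
    rw [jacobiSym_eq_of_primeFactors_subset ψ hψ hneg hQ (hB0 b hb)
      (Nat.primeFactors_mono (dvd_prod_of_mem _ hb) hP)]
    simp [ψ, hf ⟨b, hb⟩]
  refine (infinite_setOf_prime_forall_jacobiSym_eq_neg_one hn hJ).mono ?_ h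
  rintro p ⟨hp, hpB⟩
  refine ⟨hp, fun ⟨b, hb, x, hx⟩ => ?_⟩
  exact ZMod.nonsquare_of_jacobiSym_eq_neg_one (hpB b hb) ⟨x, by rw [← hx, sq]⟩

theorem Nat.exists_eq_mul_sq_of_mul_eq_mul_self {m r t s : ℕ} (hr : Squarefree r) (ht : t ≠ 0)
    (h : m * (t ^ 2 * r) = s * s) : ∃ u, m = r * u ^ 2 := by
  obtain ⟨v, rfl⟩ : t ∣ s := (Nat.pow_dvd_pow_iff two_ne_zero).1 ⟨m * r, by rw [sq s, ← h]; ring⟩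
  have hmr : m * r = v ^ 2 := by
    apply Nat.eq_of_mul_eq_mul_left (pow_pos (Nat.pos_of_ne_zero ht) 2)
    linear_combination h
  obtain ⟨u, rfl⟩ : r ∣ v := (hr.dvd_pow_iff_dvd two_ne_zero).1 ⟨m, by rw [← hmr, mul_comm]⟩
  exact ⟨u, Nat.eq_of_mul_eq_mul_right (Nat.pos_of_ne_zero hr.ne_zero)
    (by linear_combination hmr)⟩

theorem card_filter_isSquare_mul_le (N : ℕ) {P : ℤ} (hP : P ≠ 0) :
    #{y ∈ Icc (-(N : ℤ)) N | IsSquare (y * P)} ≤ N.sqrt + 1 := by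
  obtain ⟨r, t, htr, hr⟩ := Nat.sq_mul_squarefree P.natAbs
  have ht : t ≠ 0 := by rintro rfl; simp [eq_comm, hP] at htr
  calc #{y ∈ Icc (-(N : ℤ)) N | IsSquare (y * P)}
      ≤ #((range (N.sqrt + 1)).image fun u : ℕ => P.sign * (r * u ^ 2 : ℕ)) := by
        refine card_le_card fun y hy => ?_
        obtain ⟨hyN, w, hw⟩ := mem_filter.1 hy
        obtain ⟨u, hu⟩ : ∃ u, y.natAbs = r * u ^ 2 :=
          Nat.exists_eq_mul_sq_of_mul_eq_mul_self hr ht (by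
            rw [htr, ← Int.natAbs_mul, hw, Int.natAbs_mul])
        have hsign : y = P.sign * y.natAbs := by
          rcases eq_or_ne y 0 with rfl | hy0
          · simp
          rcases pos_and_pos_or_neg_and_neg_of_mul_pos
            ((hw ▸ mul_self_nonneg w).lt_of_ne' (mul_ne_zero hy0 hP)) with ⟨hy, hP⟩ | ⟨hy, hP⟩
          · rw [Int.sign_eq_one_of_pos hP]; omega
          · rw [Int.sign_eq_neg_one_of_neg hP]; omega
        refine mem_image.2
          ⟨u, mem_range.2 (Nat.lt_succ_of_le (Nat.le_sqrt.2 ?_)), by rw [← hu, ← hsign]⟩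
        have hyN : r * u ^ 2 ≤ N := by have := mem_Icc.1 hyN; omega
        nlinarith [Nat.pos_of_ne_zero hr.ne_zero]
    _ ≤ N.sqrt + 1 := card_image_le.trans (card_range _).le

theorem exists_mem_isSquare_mul_prod_of_odd {B : Finset ℤ}
    (h : ∃ S ⊆ B, Odd #S ∧ IsSquare (∏ b ∈ S, b)) :
    ∃ y ∈ B, (0 : ℤ) ∉ B.erase y ∧ ∃ T ⊆ B.erase y, IsSquare (y * ∏ b ∈ T, b) := by
  by_cases h0 : (0 : ℤ) ∈ B
  · exact ⟨0, h0, notMem_erase 0 B, ∅, empty_subset _, ⟨0, by simp⟩⟩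
  obtain ⟨S, hSB, hS, hsq⟩ := h
  obtain ⟨y, hy⟩ := card_pos.1 hS.pos
  exact ⟨y, hSB hy, fun h => h0 (mem_of_mem_erase h), S.erase y, erase_subset_erase y hSB,
    by rwa [mul_prod_erase S (fun b => b) hy]⟩

theorem card_filter_exists_isSquare_mul_prod_le (N : ℕ) {B : Finset ℤ} (hB : (0 : ℤ) ∉ B) :
    #{y ∈ Icc (-(N : ℤ)) N | ∃ T ⊆ B, IsSquare (y * ∏ b ∈ T, b)} ≤ 2 ^ #B * (N.sqrt + 1) := by
  calc #{y ∈ Icc (-(N : ℤ)) N | ∃ T ⊆ B, IsSquare (y * ∏ b ∈ T, b)}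
      ≤ #(B.powerset.biUnion fun T => {y ∈ Icc (-(N : ℤ)) N | IsSquare (y * ∏ b ∈ T, b)}) :=
        card_le_card fun y hy => by
          obtain ⟨hy, T, hT, hsq⟩ := mem_filter.1 hy
          exact mem_biUnion.2 ⟨T, mem_powerset.2 hT, mem_filter.2 ⟨hy, hsq⟩⟩
    _ ≤ ∑ T ∈ B.powerset, #{y ∈ Icc (-(N : ℤ)) N | IsSquare (y * ∏ b ∈ T, b)} := card_biUnion_le
    _ ≤ ∑ T ∈ B.powerset, (N.sqrt + 1) := sum_le_sum fun T hT =>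
        card_filter_isSquare_mul_le N <| prod_ne_zero_iff.2 fun b hb h =>
          hB (h ▸ mem_powerset.1 hT hb)
    _ = 2 ^ #B * (N.sqrt + 1) := by rw [sum_const, card_powerset, smul_eq_mul]

theorem card_filter_powersetCard_succ_le (P : Finset ℤ → Prop) [DecidablePred P]
    (hP : ∀ B, P B → ∃ S ⊆ B, Odd #S ∧ IsSquare (∏ b ∈ S, b)) (N k : ℕ) :
    #{B ∈ (Icc (-(N : ℤ)) N).powersetCard (k + 1) | P B} ≤ (4 * N) ^ k * (N.sqrt + 1) := by
  set I := Icc (-(N : ℤ)) N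
  calc #{B ∈ I.powersetCard (k + 1) | P B}
      ≤ #((((I.erase 0).powersetCard k).sigma fun B =>
          {y ∈ I | ∃ T ⊆ B, IsSquare (y * ∏ b ∈ T, b)}).image fun x => insert x.2 x.1) := by
        refine card_le_card fun B hB => ?_
        obtain ⟨hB, hPB⟩ := mem_filter.1 hB
        obtain ⟨hBI, hBk⟩ := mem_powersetCard.1 hB
        obtain ⟨y, hy, h0, T, hT, hsq⟩ := exists_mem_isSquare_mul_prod_of_odd (hP B hPB)
        refine mem_image.2 ⟨⟨B.erase y, y⟩, mem_sigma.2 ⟨mem_powersetCard.2 ⟨?_, ?_⟩,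
          mem_filter.2 ⟨hBI hy, T, hT, hsq⟩⟩, insert_erase hy⟩
        · exact fun b hb => mem_erase.2 ⟨fun h => h0 (h ▸ hb), hBI (mem_of_mem_erase hb)⟩
        · rw [card_erase_of_mem hy, hBk, Nat.add_sub_cancel]
    _ ≤ ∑ B ∈ (I.erase 0).powersetCard k, #{y ∈ I | ∃ T ⊆ B, IsSquare (y * ∏ b ∈ T, b)} :=
        card_image_le.trans (card_sigma _ _).le
    _ ≤ ∑ B ∈ (I.erase 0).powersetCard k, 2 ^ k * (N.sqrt + 1) := sum_le_sum fun B hB => by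
        obtain ⟨hBI, hBk⟩ := mem_powersetCard.1 hB
        rw [← hBk]
        exact card_filter_exists_isSquare_mul_prod_le N fun h => by simpa using hBI h
    _ ≤ (4 * N) ^ k * (N.sqrt + 1) := by
        rw [sum_const, card_powersetCard, smul_eq_mul, ← mul_assoc]
        gcongr
        calc (#(I.erase 0)).choose k * 2 ^ k ≤ (2 * N) ^ k * 2 ^ k := by
              gcongr
              refine (Nat.choose_le_pow _ _).trans (le_of_eq ?_)
              rw [card_erase_of_mem (by simp [I]), Int.card_Icc]
              congr 1
              omega
          _ = (4 * N) ^ k := by rw [← mul_pow]; ring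

theorem card_filter_powersetCard_le_rpow (P : Finset ℤ → Prop) [DecidablePred P]
    (hP : ∀ B, P B → ∃ S ⊆ B, Odd #S ∧ IsSquare (∏ b ∈ S, b)) (k : ℕ) {N : ℕ} (hN : 1 ≤ N) :
    (#{B ∈ (Icc (-(N : ℤ)) N).powersetCard k | P B} : ℝ) ≤
      2 * 4 ^ k * (N : ℝ) ^ ((k : ℝ) - 1 / 2) := by
  rcases k with _ | k
  · have hempty : {B ∈ (Icc (-(N : ℤ)) N).powersetCard 0 | P B} = ∅ := by
      refine filter_eq_empty_iff.2 fun B hB hPB => ?_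
      obtain ⟨S, hSB, hS, -⟩ := hP B hPB
      rw [powersetCard_zero, mem_singleton] at hB
      subst hB
      simp [subset_empty.1 hSB] at hS
    rw [hempty, card_empty, Nat.cast_zero]
    positivity
  have hN' : (1 : ℝ) ≤ N := by exact_mod_cast hN
  have hsqrt : (N.sqrt : ℝ) + 1 ≤ 2 * √N := by
    linarith [Real.nat_sqrt_le_real_sqrt (a := N), Real.one_le_sqrt.2 hN']
  have hpow : (N : ℝ) ^ (((k + 1 : ℕ) : ℝ) - 1 / 2) = N ^ k * √N := by
    rw [Real.sqrt_eq_rpow, ← Real.rpow_natCast, ← Real.rpow_add (by positivity)]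
    push_cast
    ring_nf
  calc (#{B ∈ (Icc (-(N : ℤ)) N).powersetCard (k + 1) | P B} : ℝ)
      ≤ ((4 * N) ^ k * (N.sqrt + 1) : ℕ) := by
        exact_mod_cast card_filter_powersetCard_succ_le P hP N k
    _ ≤ (4 * N : ℝ) ^ k * (2 * √N) := by push_cast; gcongr
    _ = 2 * 4 ^ k * (N ^ k * √N) := by ring
    _ ≤ 2 * 4 ^ (k + 1) * (N : ℝ) ^ (((k + 1 : ℕ) : ℝ) - 1 / 2) := by
        rw [hpow]
        gcongr
        · norm_num
        · omega

open Filter Topology Nat in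
theorem tendsto_div_choose_of_le_rpow {f : ℕ → ℝ} {a : ℝ} {k : ℕ} (hf0 : ∀ N, 0 ≤ f N)
    (hf : ∀ N, 1 ≤ N → f N ≤ a * N ^ ((k : ℝ) - 1 / 2)) :
    Tendsto (fun N => f N / (2 * N + 1).choose k) atTop (𝓝 0) := by
  have hlim : Tendsto (fun N : ℕ => a * k ! * (N : ℝ) ^ (-(1 / 2) : ℝ)) atTop (𝓝 0) := by
    simpa using ((tendsto_rpow_neg_atTop (by norm_num : (0 : ℝ) < 1 / 2)).comp
      tendsto_natCast_atTop_atTop).const_mul (a * k !)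
  refine tendsto_of_tendsto_of_tendsto_of_le_of_le' tendsto_const_nhds hlim
    (Eventually.of_forall fun N => div_nonneg (hf0 N) (Nat.cast_nonneg _)) ?_
  filter_upwards [eventually_ge_atTop (k + 1)] with N hN
  have hN0 : (0 : ℝ) < N := by exact_mod_cast (by omega : 0 < N)
  have hC : (N : ℝ) ^ k / k ! ≤ (2 * N + 1).choose k :=
    le_trans (by gcongr; exact_mod_cast (by omega : N ≤ 2 * N + 1 + 1 - k))
      (Nat.pow_le_choose k (2 * N + 1))
  calc f N / (2 * N + 1).choose k ≤ a * N ^ ((k : ℝ) - 1 / 2) / (N ^ k / k !) :=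
        div_le_div₀ ((hf0 N).trans (hf N (by omega))) (hf N (by omega)) (by positivity) hC
    _ = a * k ! * N ^ (-(1 / 2) : ℝ) := by
        rw [Real.rpow_sub hN0, Real.rpow_neg hN0.le, Real.rpow_natCast]
        field_simp

open Filter in
open scoped Classical in
/-- There is a constant `a > 0` such that the number of `k`-element subsets of
`[-N, N] ∩ ℤ` that contain a square modulo all but finitely many primes is at most
`a · N^(k - 1/2)`; consequently, the additive subset density of such subsets is zero. -/
theorem square_case_subset_density_zero (k : ℕ) :
    ∃ a : ℝ, 0 < a ∧
      (∀ N : ℕ, 1 ≤ N →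
        ((((Finset.Icc (-(N : ℤ)) (N : ℤ)).powersetCard k).filter
            ContainsSquareModAEPrime).card : ℝ)
          ≤ a * (N : ℝ) ^ ((k : ℝ) - 1 / 2)) ∧
      Tendsto
        (fun N : ℕ =>
          ((((Finset.Icc (-(N : ℤ)) (N : ℤ)).powersetCard k).filter
              ContainsSquareModAEPrime).card : ℝ) / (2 * N + 1).choose k)
        atTop (nhds 0) := by
  have hbound := card_filter_powersetCard_le_rpow ContainsSquareModAEPrime
    fun _ h => h.exists_odd_card_isSquare_prod
  exact ⟨2 * 4 ^ k, by positivity, fun N hN => hbound k hN,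
    tendsto_div_choose_of_le_rpow (fun N => Nat.cast_nonneg _) fun N hN => hbound k hN⟩
end

section
/- Let q be an odd prime and p₁, p₂ distinct primes different from q. Then the set B = {p₁} ∪ {p₁^j · p₂ : j = 0, 1, ..., q−1}, of cardinality q+1, contains a q-th power modulo all but a density-zero set of primes, even though B contains no perfect q-th power. -/
/-!
The exceptional set is in fact empty. Modulo a prime `p` the unit group is cyclic; writing
`p₁ = g ^ m` and `p₂ = g ^ n` for a generator `g`, either `q ∣ m` and `p₁` is a `q`-th power, or
`m` is invertible mod `q` and `p₁ ^ j * p₂ = g ^ (m j + n)` is a `q`-th power for `j ≡ -n / m`.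
No element of `B` is a perfect `q`-th power, because each has a prime factor (`p₁`, resp. `p₂`)
occurring to the first power.
-/

open Filter

/-- A set `S` of natural numbers has relative density zero in the primes. -/
def PrimesDensityZero (S : Set ℕ) : Prop :=
  Tendsto
    (fun N : ℕ =>
      ((S ∩ Set.Iic N).ncard : ℝ) / (({p : ℕ | p.Prime} ∩ Set.Iic N).ncard : ℝ))
    atTop (nhds 0)

theorem Int.exists_lt_dvd_mul_add_of_not_dvd {q : ℕ} (hq : q.Prime) {m : ℤ} (hm : ¬ (q : ℤ) ∣ m)
    (n : ℤ) : ∃ j < q, (q : ℤ) ∣ m * j + n := by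
  have := Fact.mk hq
  have hm0 : (m : ZMod q) ≠ 0 := by rwa [Ne, ZMod.intCast_zmod_eq_zero_iff_dvd]
  refine ⟨(-(n : ZMod q) * (m : ZMod q)⁻¹).val, ZMod.val_lt _, ?_⟩
  rw [← ZMod.intCast_zmod_eq_zero_iff_dvd]
  push_cast [ZMod.natCast_val, ZMod.cast_id]
  field_simp
  ring

theorem IsCyclic.exists_pow_eq_or_exists_pow_eq_pow_mul {G : Type*} [Group G] [IsCyclic G]
    {q : ℕ} (hq : q.Prime) (a b : G) :
    (∃ x : G, x ^ q = a) ∨ ∃ j < q, ∃ x : G, x ^ q = a ^ j * b := by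
  obtain ⟨g, hg⟩ := IsCyclic.exists_generator (α := G)
  obtain ⟨m, rfl⟩ := Subgroup.mem_zpowers_iff.1 (hg a)
  obtain ⟨n, rfl⟩ := Subgroup.mem_zpowers_iff.1 (hg b)
  by_cases hm : (q : ℤ) ∣ m
  · obtain ⟨t, rfl⟩ := hm
    exact .inl ⟨g ^ t, by rw [← zpow_natCast, ← zpow_mul, mul_comm]⟩
  · obtain ⟨j, hj, t, ht⟩ := Int.exists_lt_dvd_mul_add_of_not_dvd hq hm n
    refine .inr ⟨j, hj, g ^ t, ?_⟩
    rw [← zpow_natCast, ← zpow_natCast, ← zpow_mul, ← zpow_mul, ← zpow_add, mul_comm t, ← ht]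

theorem FiniteField.exists_pow_eq_or_exists_pow_eq_pow_mul {F : Type*} [Field F] [Finite F]
    {q : ℕ} (hq : q.Prime) (a b : F) :
    (∃ x : F, x ^ q = a) ∨ ∃ j < q, ∃ x : F, x ^ q = a ^ j * b := by
  rcases eq_or_ne a 0 with rfl | ha
  · exact .inl ⟨0, zero_pow hq.ne_zero⟩
  rcases eq_or_ne b 0 with rfl | hb
  · exact .inr ⟨0, hq.pos, 0, by rw [zero_pow hq.ne_zero, mul_zero]⟩
  rcases IsCyclic.exists_pow_eq_or_exists_pow_eq_pow_mul hq (Units.mk0 a ha) (Units.mk0 b hb)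
    with ⟨x, hx⟩ | ⟨j, hj, x, hx⟩
  · exact .inl ⟨x, by simpa using congrArg Units.val hx⟩
  · exact .inr ⟨j, hj, x, by simpa using congrArg Units.val hx⟩

theorem Nat.ne_pow_of_factorization_eq_one {n p q : ℕ} (hq : 1 < q) (h : n.factorization p = 1)
    (m : ℕ) : n ≠ m ^ q := by
  rintro rfl
  rw [Nat.factorization_pow, Finsupp.smul_apply, smul_eq_mul] at h
  exact hq.ne' (Nat.eq_one_of_mul_eq_one_right h)

theorem Int.ne_pow_of_factorization_natAbs_eq_one {b : ℤ} {p q : ℕ} (hq : 1 < q)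
    (h : b.natAbs.factorization p = 1) (m : ℤ) : b ≠ m ^ q := by
  rintro rfl
  exact Nat.ne_pow_of_factorization_eq_one hq h m.natAbs (Int.natAbs_pow m q)

theorem primesDensityZero_empty : PrimesDensityZero ∅ := by
  simp [PrimesDensityZero]

def powerFamily (q p₁ p₂ : ℕ) : Finset ℤ :=
  insert (p₁ : ℤ) ((Finset.range q).image fun j => (p₁ : ℤ) ^ j * p₂)

section PowerFamily

variable {q p₁ p₂ : ℕ}

theorem card_powerFamily (hp₁ : p₁.Prime) (hp₂ : p₂.Prime) (hne : p₁ ≠ p₂) :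
    (powerFamily q p₁ p₂).card = q + 1 := by
  rw [powerFamily, Finset.card_insert_of_notMem, Finset.card_image_of_injective, Finset.card_range]
  · intro i j hij
    exact Int.pow_right_injective (by simpa using hp₁.one_lt)
      (mul_right_cancel₀ (by exact_mod_cast hp₂.ne_zero) hij)
  · simp only [Finset.mem_image, Finset.mem_range, not_exists, not_and]
    intro j _ h
    have : p₁ ^ j * p₂ = p₁ := by exact_mod_cast h
    exact hne ((Nat.prime_dvd_prime_iff_eq hp₂ hp₁).1 (Dvd.intro_left _ this)).symm

theorem exists_factorization_natAbs_eq_one_of_mem_powerFamily (hp₁ : p₁.Prime) (hp₂ : p₂.Prime)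
    (hne : p₁ ≠ p₂) {b : ℤ} (hb : b ∈ powerFamily q p₁ p₂) : ∃ p, b.natAbs.factorization p = 1 := by
  simp only [powerFamily, Finset.mem_insert, Finset.mem_image, Finset.mem_range] at hb
  rcases hb with rfl | ⟨j, -, rfl⟩
  · exact ⟨p₁, by rw [Int.natAbs_natCast, hp₁.factorization_self]⟩
  · refine ⟨p₂, ?_⟩
    rw [Int.natAbs_mul, Int.natAbs_pow, Int.natAbs_natCast, Int.natAbs_natCast,
      Nat.factorization_mul (pow_ne_zero j hp₁.ne_zero) hp₂.ne_zero, Finsupp.add_apply,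
      Nat.factorization_pow, hp₁.factorization, hp₂.factorization_self]
    simp [Finsupp.single_eq_of_ne hne.symm]

theorem not_exists_mem_powerFamily_eq_pow (hq : q.Prime) (hp₁ : p₁.Prime) (hp₂ : p₂.Prime)
    (hne : p₁ ≠ p₂) : ¬ ∃ b ∈ powerFamily q p₁ p₂, ∃ m : ℤ, b = m ^ q := by
  rintro ⟨b, hb, m, hbm⟩
  obtain ⟨p, hp⟩ := exists_factorization_natAbs_eq_one_of_mem_powerFamily hp₁ hp₂ hne hb
  exact Int.ne_pow_of_factorization_natAbs_eq_one hq.one_lt hp m hbm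

theorem exists_mem_powerFamily_pow_eq (hq : q.Prime) (p : ℕ) [Fact p.Prime] :
    ∃ b ∈ powerFamily q p₁ p₂, ∃ x : ZMod p, x ^ q = (b : ZMod p) := by
  rcases FiniteField.exists_pow_eq_or_exists_pow_eq_pow_mul hq (p₁ : ZMod p) (p₂ : ZMod p)
    with ⟨x, hx⟩ | ⟨j, hj, x, hx⟩
  · exact ⟨p₁, Finset.mem_insert_self _ _, x, by simpa using hx⟩
  · exact ⟨p₁ ^ j * p₂,
      Finset.mem_insert_of_mem (Finset.mem_image_of_mem _ (Finset.mem_range.2 hj)), x,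
      by simpa using hx⟩

end PowerFamily

theorem exceptional_set_of_card_q_add_one_general
    (q p₁ p₂ : ℕ) (hq : q.Prime)
    (hp₁ : p₁.Prime) (hp₂ : p₂.Prime) (hne : p₁ ≠ p₂) :
    (insert (p₁ : ℤ) ((Finset.range q).image (fun j => (p₁ : ℤ) ^ j * p₂))).card = q + 1 ∧
    PrimesDensityZero
      {p : ℕ | p.Prime ∧ ¬ ∃ b ∈
          insert (p₁ : ℤ) ((Finset.range q).image (fun j => (p₁ : ℤ) ^ j * p₂)),
        ∃ x : ZMod p, x ^ q = (b : ZMod p)} ∧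
    ¬ ∃ b ∈ insert (p₁ : ℤ) ((Finset.range q).image (fun j => (p₁ : ℤ) ^ j * p₂)),
        ∃ m : ℤ, b = m ^ q := by
  refine ⟨card_powerFamily hp₁ hp₂ hne, ?_, not_exists_mem_powerFamily_eq_pow hq hp₁ hp₂ hne⟩
  convert primesDensityZero_empty
  refine Set.eq_empty_of_forall_notMem fun p ⟨hp, hnone⟩ => hnone ?_
  have := Fact.mk hp
  exact exists_mem_powerFamily_pow_eq hq p

/-- For an odd prime `q` and distinct primes `p₁, p₂ ≠ q`, the `(q+1)`-element set
`B = {p₁} ∪ {p₁^j · p₂ : 0 ≤ j ≤ q-1}` contains a `q`-th power modulo all but a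
density-zero set of primes, yet contains no perfect `q`-th power. -/
theorem exceptional_set_of_card_q_add_one
    (q p₁ p₂ : ℕ) (hq : q.Prime) (hodd : Odd q)
    (hp₁ : p₁.Prime) (hp₂ : p₂.Prime) (hne : p₁ ≠ p₂) (h₁q : p₁ ≠ q) (h₂q : p₂ ≠ q) :
    (insert (p₁ : ℤ) ((Finset.range q).image (fun j => (p₁ : ℤ) ^ j * p₂))).card = q + 1 ∧
    PrimesDensityZero
      {p : ℕ | p.Prime ∧ ¬ ∃ b ∈
          insert (p₁ : ℤ) ((Finset.range q).image (fun j => (p₁ : ℤ) ^ j * p₂)),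
        ∃ x : ZMod p, x ^ q = (b : ZMod p)} ∧
    ¬ ∃ b ∈ insert (p₁ : ℤ) ((Finset.range q).image (fun j => (p₁ : ℤ) ^ j * p₂)),
        ∃ m : ℤ, b = m ^ q :=
  exceptional_set_of_card_q_add_one_general q p₁ p₂ hq hp₁ hp₂ hne
end
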